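/- Let G be a connected simple graph on a finite nonempty vertex set V and let (s_1, s_2, …) be a farthest-first traversal of G. If there are indices i < j and a vertex w ∈ V with d(s_i, w) ≤ r and d(s_j, w) ≤ r, then every vertex of V is within distance 2r of the set {s_1, …, s_{j−1}}. -/

import Mathlib

/-!
The vertex `s j` is within `2r` of `s i` (through `w`), so its distance to `{s_0, …, s_{j-1}}`
is at most `2r`; by the farthest-first rule that distance is the largest over all vertices.
-/

/-- A sequence `s` (0-indexed; entry `j` plays the role of `s_{j+1}`) is a
burning sequence of length `k` for `G` if every vertex `v` is reachable from
some entry `s j` (with `j < k`) at distance at most `k - (j+1)`. -/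
def IsBurningSeq {V : Type*} (G : SimpleGraph V) (k : ℕ) (s : ℕ → V) : Prop :=
  ∀ v : V, ∃ j, j < k ∧ G.Reachable (s j) v ∧ G.dist (s j) v ≤ k - (j + 1)

/-- The set `{s_1, …, s_n}` of the first `n` entries of the sequence `s`. -/
def prefixSet {V : Type*} (s : ℕ → V) (n : ℕ) : Set V := s '' Set.Iio n

/-- Distance from a vertex to a set of vertices: `d(v,S) = min_{u ∈ S} d(v,u)`. -/
noncomputable def dSet {V : Type*} (G : SimpleGraph V) (v : V) (S : Set V) : ℕ :=
  sInf (G.dist v '' S)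

/-- `s` is a farthest-first traversal of `G`: for every `i ≥ 1` (0-indexed),
`s i` realizes the maximum distance to the set of previously chosen vertices. -/
def IsFFT {V : Type*} (G : SimpleGraph V) (s : ℕ → V) : Prop :=
  ∀ i : ℕ, 1 ≤ i →
    dSet G (s i) (prefixSet s i) = sSup (Set.range fun v : V => dSet G v (prefixSet s i))

/-- The burning number: the minimum length of a burning sequence for `G`. -/
noncomputable def burningNumber {V : Type*} (G : SimpleGraph V) : ℕ :=
  sInf {k | ∃ s : ℕ → V, IsBurningSeq G k s}

section

variable {V : Type*} {G : SimpleGraph V}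

theorem dSet_le_dist {v u : V} {S : Set V} (hu : u ∈ S) : dSet G v S ≤ G.dist v u :=
  Nat.sInf_le ⟨u, hu, rfl⟩

theorem exists_mem_dist_eq_dSet (v : V) {S : Set V} (hS : S.Nonempty) :
    ∃ u ∈ S, G.dist v u = dSet G v S := by
  obtain ⟨u, hu, hd⟩ := Nat.sInf_mem (hS.image (G.dist v))
  exact ⟨u, hu, hd⟩

theorem IsFFT.dSet_le [Finite V] {s : ℕ → V} (hs : IsFFT G s) {j : ℕ} (hj : 1 ≤ j) (v : V) :
    dSet G v (prefixSet s j) ≤ dSet G (s j) (prefixSet s j) :=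
  hs j hj ▸ le_csSup (Set.finite_range _).bddAbove ⟨v, rfl⟩

end

theorem stmt3_general {V : Type*} [Fintype V] (G : SimpleGraph V) (hG : G.Connected)
    (s : ℕ → V) (hs : IsFFT G s) (r i j : ℕ) (hij : i < j) (w : V)
    (hi : G.dist (s i) w ≤ r) (hj : G.dist (s j) w ≤ r) :
    ∀ v : V, ∃ l, l < j ∧ G.dist v (s l) ≤ 2 * r := by
  intro v
  have hmem : s i ∈ prefixSet s j := ⟨i, hij, rfl⟩
  have hsj : dSet G (s j) (prefixSet s j) ≤ 2 * r :=
    calc dSet G (s j) (prefixSet s j) ≤ G.dist (s j) (s i) := dSet_le_dist hmem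
      _ ≤ G.dist (s j) w + G.dist w (s i) := hG.dist_triangle
      _ ≤ 2 * r := by rw [G.dist_comm (u := w)]; omega
  obtain ⟨_, ⟨l, hl, rfl⟩, hd⟩ := exists_mem_dist_eq_dSet (G := G) v ⟨_, hmem⟩
  exact ⟨l, hl, hd ▸ (hs.dSet_le (by omega) v).trans hsj⟩

/-- if two distinct vertices `s i`, `s j` (with `i < j`,
0-indexed) of a farthest-first traversal are both within distance `r` of some
vertex `w`, then every vertex of `V` is within distance `2r` of the set
`{s_1, …, s_{j-1}}` (1-indexed), i.e. of `{s l | l < j}` (0-indexed). -/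
theorem stmt3 {V : Type*} [Fintype V] [Nonempty V] (G : SimpleGraph V) (hG : G.Connected)
    (s : ℕ → V) (hs : IsFFT G s) (r i j : ℕ) (hij : i < j) (w : V)
    (hi : G.dist (s i) w ≤ r) (hj : G.dist (s j) w ≤ r) :
    ∀ v : V, ∃ l, l < j ∧ G.dist v (s l) ≤ 2 * r :=
  stmt3_general G hG s hs r i j hij w hi hj
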